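/- Let $k$ be a global function field with fixed place $\infty$, $A$ the ring of elements regular away from $\infty$, $Y \subset k^r$ a projective $A$-module of rank $r$, and let $z$ be a point of the Berkovich Drinfeld period domain $\Omega_\infty^r$ with associated norm $\nu_z$ on $k_\infty^r$ and imaginary part $\mathrm{im}(z) = D(\nu_z)$. For a non-constant $a \in A$ and $\mathrm{Re}(s) > 1$, the Eisenstein series $\mathbb{E}^Y(z,s) = \|Y\|_A^s \sum_{0\ne\lambda\in Y} \mathrm{im}(z)^s/\nu_z(\lambda)^{rs}$ satisfies $(1 - |a|_\infty^{r-rs})\,\mathbb{E}^Y(z,s) = \frac{\|Y\|_A^s\,\mathrm{im}(z)^s}{|a|_\infty^{rs}} \sum_{0 \ne w \in \frac{1}{a}Y/Y}\Big[\nu_z(w)^{-rs} + \sum_{0\ne\lambda\in Y,\ \nu_z(\lambda)\le\nu_z(w)} \big(\nu_z(\lambda-w)^{-rs} - \nu_z(\lambda)^{-rs}\big)\Big]$, and the right-hand side is a finite sum for each $w$. Consequently $\mathbb{E}^Y(z,s)$ extends meromorphically in $s$ and $\mathbb{E}^Y(z,0) = -1$. -/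

import Mathlib

/-! With `f v = ν(v)^{-rs}` and `T = ∑_{0 ≠ λ ∈ Y} f λ`, substituting `v = a⁻¹λ` gives
`∑_{0 ≠ v ∈ a⁻¹Y} f v = |a|^{rs} T`. Split `a⁻¹Y \ {0}` into `Y \ {0}` and the cosets `Y - w`,
`w ∈ S`. By the ultrametric inequality `f (λ - w) = f λ` once `ν(λ) > ν(w)`, so each coset sum
is `f w + T` plus a finite correction. As `#S + 1 = |a|^r`, this gives
`(|a|^{rs} - |a|^r) T = ∑_{w ∈ S} (f w + correction)`. At `s = 0` all terms are `1` and the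
corrections vanish, leaving `#S / (1 - |a|^r) = -1`. -/

/-- An abstract (non-archimedean, multiplicative) absolute value on a field `F`. -/
structure NAAbs (F : Type*) [Field F] where
  abs : F → ℝ
  nonneg : ∀ a, 0 ≤ abs a
  eq_zero : ∀ a, abs a = 0 ↔ a = 0
  map_mul : ∀ a b, abs (a * b) = abs a * abs b
  ultra : ∀ a b, abs (a + b) ≤ max (abs a) (abs b)

/-- `F` together with `A` is a non-archimedean *local* field with uniformizer `π`:
the value group is discrete with generator `|π| < 1`, the residue field is finite,
and `F` is complete. -/
def NAAbs.IsLocal {F : Type*} [Field F] (A : NAAbs F) (π : F) : Prop :=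
  π ≠ 0 ∧ A.abs π < 1 ∧ (∀ a : F, A.abs a < 1 → A.abs a ≤ A.abs π) ∧
  (∃ S : Finset F, ∀ a : F, A.abs a ≤ 1 → ∃ s ∈ S, A.abs (a - s) < 1) ∧
  (∀ f : ℕ → F, (∀ ε : ℝ, 0 < ε → ∃ N, ∀ m ≥ N, ∀ n ≥ N, A.abs (f m - f n) < ε) →
    ∃ x : F, ∀ ε : ℝ, 0 < ε → ∃ N, ∀ n ≥ N, A.abs (f n - x) < ε)

/-- A non-archimedean norm on an `F`-vector space `V`, relative to the absolute value `A`. -/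
structure NANorm {F : Type*} [Field F] (A : NAAbs F)
    (V : Type*) [AddCommGroup V] [Module F V] where
  nu : V → ℝ
  nonneg : ∀ v, 0 ≤ nu v
  eq_zero : ∀ v, nu v = 0 ↔ v = 0
  smul_eq : ∀ (a : F) (v : V), nu (a • v) = A.abs a * nu v
  ultra : ∀ u v, nu (u + v) ≤ max (nu u) (nu v)

/-- `b` is an `O_F`-basis of the `O_F`-lattice `L ⊆ V`. -/
def IsLatticeBasis {F : Type*} [Field F] (A : NAAbs F)
    {V : Type*} [AddCommGroup V] [Module F V]
    {ι : Type*} [Fintype ι] (b : ι → V) (L : Set V) : Prop :=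
  LinearIndependent F b ∧
  ∀ v : V, v ∈ L ↔ ∃ c : ι → F, (∀ i, A.abs (c i) ≤ 1) ∧ v = ∑ i, c i • b i

/-- `b` is orthogonal with respect to the norm(-like function) `νn`. -/
def IsOrthogonalFor {F : Type*} [Field F] (A : NAAbs F)
    {V : Type*} [AddCommGroup V] [Module F V]
    {ι : Type*} [Fintype ι] (νn : V → ℝ) (b : ι → V) : Prop :=
  ∀ c : ι → F, νn (∑ i, c i • b i) = ⨆ i, νn (c i • b i)

section Cosets

variable {V : Type*} [AddCommGroup V] (Y Z : AddSubgroup V) {S : Finset V}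

noncomputable def cosetReprEquiv (hYZ : Y ≤ Z) (hSmem : ∀ w ∈ S, w ∈ Z ∧ w ∉ Y)
    (hSinj : ∀ w ∈ S, ∀ w' ∈ S, w - w' ∈ Y → w = w')
    (hSsurj : ∀ v ∈ Z, v ∉ Y → ∃ w ∈ S, v - w ∈ Y) :
    S × Y ≃ {v : V // v ∈ Z ∧ v ∉ Y} :=
  Equiv.ofBijective
    (fun p => ⟨p.2 - p.1, Z.sub_mem (hYZ p.2.2) (hSmem p.1 p.1.2).1,
      fun h => (hSmem p.1 p.1.2).2 (by simpa using Y.sub_mem p.2.2 h)⟩)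
    (by
      constructor
      · rintro ⟨⟨w, hw⟩, ⟨l, hl⟩⟩ ⟨⟨w', hw'⟩, ⟨l', hl'⟩⟩ h
        have hsub : l - w = l' - w' := congrArg Subtype.val h
        obtain rfl : w = w' := hSinj w hw w' hw' (by
          rw [show w - w' = l - l' by linear_combination (norm := abel_nf) hsub.symm]
          exact Y.sub_mem hl hl')
        obtain rfl : l = l' := sub_left_injective hsub
        rfl
      · rintro ⟨v, hvZ, hvY⟩
        obtain ⟨w, hw, hvw⟩ :=
          hSsurj (-v) (Z.neg_mem hvZ) fun h => hvY (by simpa using Y.neg_mem h)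
        refine ⟨⟨⟨w, hw⟩, ⟨v + w, ?_⟩⟩, Subtype.ext (add_sub_cancel_right v w)⟩
        simpa [add_comm] using Y.neg_mem hvw)

theorem tsum_eq_tsum_add_sum_tsum_sub {M : Type*} [NormedAddCommGroup M] [CompleteSpace M]
    (hYZ : Y ≤ Z) (hSmem : ∀ w ∈ S, w ∈ Z ∧ w ∉ Y)
    (hSinj : ∀ w ∈ S, ∀ w' ∈ S, w - w' ∈ Y → w = w')
    (hSsurj : ∀ v ∈ Z, v ∉ Y → ∃ w ∈ S, v - w ∈ Y)
    {f : V → M} (hf : Summable fun v : {v : V // v ∈ Z ∧ v ≠ 0} => f v) :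
    ∑' v : {v : V // v ∈ Z ∧ v ≠ 0}, f v =
      ∑' v : {v : V // v ∈ Y ∧ v ≠ 0}, f v + ∑ w ∈ S, ∑' l : Y, f (l - w) := by
  set Y₀ : Set V := {v | v ∈ Y ∧ v ≠ 0}
  set D : Set V := {v | v ∈ Z ∧ v ∉ Y}
  have hZ₀ : {v | v ∈ Z ∧ v ≠ 0} = Y₀ ∪ D := by
    ext v
    by_cases hv : v ∈ Y
    · simp [Y₀, D, hv, hYZ hv]
    · have : v ≠ 0 := fun h => hv (h ▸ Y.zero_mem)
      simp [Y₀, D, hv, this]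
  have hY₀ : Y₀ ⊆ {v | v ∈ Z ∧ v ≠ 0} := hZ₀ ▸ Set.subset_union_left
  have hD : D ⊆ {v | v ∈ Z ∧ v ≠ 0} := hZ₀ ▸ Set.subset_union_right
  have hdisj : Disjoint Y₀ D := Set.disjoint_left.mpr fun v hv hv' => hv'.2 hv.1
  have hsumD : Summable (f ∘ (↑) : D → M) := hf.comp_injective (Set.inclusion_injective hD)
  have hsumProd : Summable fun p : S × Y => f (p.2 - p.1) :=
    (cosetReprEquiv Y Z hYZ hSmem hSinj hSsurj).summable_iff.mpr hsumD
  calc ∑' v : {v : V // v ∈ Z ∧ v ≠ 0}, f v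
      = ∑' v : ↥(Y₀ ∪ D), f v := by rw [← hZ₀]; rfl
    _ = ∑' v : Y₀, f v + ∑' v : D, f v :=
        Summable.tsum_union_disjoint hdisj
          (hf.comp_injective (Set.inclusion_injective hY₀)) hsumD
    _ = ∑' v : {v : V // v ∈ Y ∧ v ≠ 0}, f v + ∑ w ∈ S, ∑' l : Y, f (l - w) := by
        congr 1
        change ∑' v : {v : V // v ∈ Z ∧ v ∉ Y}, f v = _
        rw [← (cosetReprEquiv Y Z hYZ hSmem hSinj hSsurj).tsum_eq]
        exact hsumProd.tsum_prod.trans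
          ((tsum_fintype _).trans (Finset.sum_coe_sort S fun w => ∑' l : Y, f (l - w)))

end Cosets

def smulNonzeroEquiv {F V : Type*} [Field F] [AddCommGroup V] [Module F V] (Y : AddSubgroup V)
    {a : F} (ha : a ≠ 0) : {v : V // a • v ∈ Y ∧ v ≠ 0} ≃ {v : V // v ∈ Y ∧ v ≠ 0} :=
  (MulAction.toPerm (Units.mk0 a ha)).subtypeEquiv fun _ =>
    and_congr_right fun _ => (smul_ne_zero_iff_right ha).symm

theorem tsum_sub_eq_of_finite {V M : Type*} [AddCommGroup V] [AddCommGroup M] [TopologicalSpace M]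
    [IsTopologicalAddGroup M] [T2Space M] (Y : AddSubgroup V) {f : V → M} (w : V) {E : Set V}
    (hE : E ⊆ {v | v ∈ Y ∧ v ≠ 0}) (hEfin : E.Finite)
    (hfE : ∀ v ∈ Y, v ≠ 0 → v ∉ E → f (v - w) = f v)
    (hf : Summable fun v : {v : V // v ∈ Y ∧ v ≠ 0} => f v) :
    ∑' l : Y, f (l - w) =
      f (-w) + ∑' v : {v : V // v ∈ Y ∧ v ≠ 0}, f v + ∑' v : E, (f (v - w) - f v) := by
  set Y₀ : Set V := {v | v ∈ Y ∧ v ≠ 0}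
  set g : V → M := fun v => f (v - w)
  have hind : (Y : Set V).indicator g =
      Y₀.indicator f + ({0} : Set V).indicator g + E.indicator (g - f) := by
    ext v
    by_cases hvY : v ∈ Y
    · by_cases hv0 : v = 0
      · have h0E : (0 : V) ∉ E := fun h => (hE h).2 rfl
        subst hv0
        simp [Y₀, h0E]
      · by_cases hvE : v ∈ E
        · simp [Y₀, g, hvY, hv0, hvE]
        · simp [Y₀, g, hvY, hv0, hvE, hfE v hvY hv0 hvE]
    · have hvE : v ∉ E := fun h => hvY (hE h).1
      have hv0 : v ≠ 0 := fun h => hvY (h ▸ Y.zero_mem)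
      simp [Y₀, hvY, hv0, hvE]
  have hY₀ : Summable (Y₀.indicator f) := summable_subtype_iff_indicator.mp hf
  have h0 : Summable (({0} : Set V).indicator g) :=
    summable_subtype_iff_indicator.mp ((Set.finite_singleton 0).summable g)
  have hE' : Summable (E.indicator (g - f)) :=
    summable_subtype_iff_indicator.mp (hEfin.summable (g - f))
  calc ∑' l : Y, f (l - w)
      = ∑' v, (Y : Set V).indicator g v := tsum_subtype (Y : Set V) g
    _ = ∑' v, Y₀.indicator f v + ∑' v, ({0} : Set V).indicator g v +
          ∑' v, E.indicator (g - f) v := by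
        rw [hind]
        exact ((hY₀.add h0).tsum_add hE').trans (congrArg (· + _) (hY₀.tsum_add h0))
    _ = f (-w) + ∑' v : {v : V // v ∈ Y ∧ v ≠ 0}, f v + ∑' v : E, (f (v - w) - f v) := by
        rw [← tsum_subtype, ← tsum_subtype, ← tsum_subtype, tsum_singleton,
          add_comm (∑' _ : Y₀, _), show g 0 = f (-w) from congrArg f (zero_sub w)]
        rfl

namespace NAAbs

variable {F : Type*} [Field F] (A : NAAbs F)

theorem abs_one : A.abs 1 = 1 := by
  have h1 : A.abs 1 ≠ 0 := fun h => one_ne_zero ((A.eq_zero 1).mp h)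
  exact mul_left_cancel₀ h1 (by rw [← A.map_mul, mul_one, mul_one])

theorem abs_neg_one : A.abs (-1) = 1 := by
  have h : A.abs (-1) * A.abs (-1) = 1 := by rw [← A.map_mul, neg_mul_neg, one_mul, abs_one]
  nlinarith [A.nonneg (-1)]

theorem cpow_abs_ne_zero {a : F} (ha : a ≠ 0) (t : ℂ) : (A.abs a : ℂ) ^ t ≠ 0 :=
  fun h => ha ((A.eq_zero a).mp (by exact_mod_cast ((Complex.cpow_eq_zero_iff _ _).mp h).1))

end NAAbs

namespace NANorm

variable {F : Type*} [Field F] {A : NAAbs F} {V : Type*} [AddCommGroup V] [Module F V]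
  (ν : NANorm A V)

theorem nu_neg (v : V) : ν.nu (-v) = ν.nu v := by
  rw [← neg_one_smul F v, ν.smul_eq, A.abs_neg_one, one_mul]

theorem nu_sub_of_lt {v w : V} (h : ν.nu w < ν.nu v) : ν.nu (v - w) = ν.nu v := by
  have hle : ν.nu (v - w) ≤ ν.nu v := by
    simpa [sub_eq_add_neg, ν.nu_neg, h.le] using ν.ultra v (-w)
  refine hle.antisymm (not_lt.mp fun hlt => ?_)
  have hv := ν.ultra (v - w) w
  rw [sub_add_cancel] at hv
  exact hv.not_gt (max_lt hlt h)

theorem inv_cpow_nu_smul (a : F) (v : V) (t : ℂ) :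
    ((ν.nu (a • v) : ℂ) ^ t)⁻¹ = ((A.abs a : ℂ) ^ t)⁻¹ * ((ν.nu v : ℂ) ^ t)⁻¹ := by
  rw [ν.smul_eq, Complex.ofReal_mul, Complex.mul_cpow_ofReal_nonneg (A.nonneg a) (ν.nonneg v),
    mul_inv]

theorem summable_inv_cpow_nu_of_smul_mem (Y : AddSubgroup V) {a : F} (ha : a ≠ 0) (t : ℂ)
    (hsum : Summable fun v : {v : V // v ∈ Y ∧ v ≠ 0} => ((ν.nu v : ℂ) ^ t)⁻¹) :
    Summable fun v : {v : V // a • v ∈ Y ∧ v ≠ 0} => ((ν.nu v : ℂ) ^ t)⁻¹ := by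
  have hc : ((A.abs a : ℂ) ^ t)⁻¹ ≠ 0 := inv_ne_zero (A.cpow_abs_ne_zero ha t)
  rw [← summable_mul_left_iff hc]
  refine ((smulNonzeroEquiv Y ha).summable_iff.mpr hsum).congr fun v => ?_
  exact ν.inv_cpow_nu_smul a v t

theorem tsum_inv_cpow_nu_of_smul_mem (Y : AddSubgroup V) {a : F} (ha : a ≠ 0) (t : ℂ) :
    ∑' v : {v : V // a • v ∈ Y ∧ v ≠ 0}, ((ν.nu v : ℂ) ^ t)⁻¹ =
      (A.abs a : ℂ) ^ t * ∑' v : {v : V // v ∈ Y ∧ v ≠ 0}, ((ν.nu v : ℂ) ^ t)⁻¹ := by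
  have hc := A.cpow_abs_ne_zero ha t
  calc ∑' v : {v : V // a • v ∈ Y ∧ v ≠ 0}, ((ν.nu v : ℂ) ^ t)⁻¹
      = (A.abs a : ℂ) ^ t * ∑' v : {v : V // a • v ∈ Y ∧ v ≠ 0},
          ((A.abs a : ℂ) ^ t)⁻¹ * ((ν.nu v : ℂ) ^ t)⁻¹ := by
        rw [tsum_mul_left, mul_inv_cancel_left₀ hc]
    _ = (A.abs a : ℂ) ^ t * ∑' v : {v : V // a • v ∈ Y ∧ v ≠ 0},
          ((ν.nu (smulNonzeroEquiv Y ha v) : ℂ) ^ t)⁻¹ := by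
        simp only [← ν.inv_cpow_nu_smul]
        rfl
    _ = _ := by rw [(smulNonzeroEquiv Y ha).tsum_eq fun v => ((ν.nu v : ℂ) ^ t)⁻¹]

theorem tsum_inv_cpow_nu_sub (Y : AddSubgroup V)
    (hfin : ∀ c : ℝ, {v : V | v ∈ Y ∧ ν.nu v ≤ c}.Finite) (t : ℂ)
    (hsum : Summable fun v : {v : V // v ∈ Y ∧ v ≠ 0} => ((ν.nu v : ℂ) ^ t)⁻¹) (w : V) :
    ∑' l : Y, ((ν.nu (l - w) : ℂ) ^ t)⁻¹ =
      ((ν.nu w : ℂ) ^ t)⁻¹ + ∑' v : {v : V // v ∈ Y ∧ v ≠ 0}, ((ν.nu v : ℂ) ^ t)⁻¹ +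
        ∑' v : {v : V // v ∈ Y ∧ v ≠ 0 ∧ ν.nu v ≤ ν.nu w},
          (((ν.nu (v - w) : ℂ) ^ t)⁻¹ - ((ν.nu v : ℂ) ^ t)⁻¹) := by
  have h := tsum_sub_eq_of_finite Y (f := fun v => ((ν.nu v : ℂ) ^ t)⁻¹) w
    (E := {v | v ∈ Y ∧ v ≠ 0 ∧ ν.nu v ≤ ν.nu w}) (fun v hv => ⟨hv.1, hv.2.1⟩)
    ((hfin (ν.nu w)).subset fun v hv => ⟨hv.1, hv.2.2⟩)
    (fun v hvY hv0 hvE => by rw [ν.nu_sub_of_lt (not_le.mp fun h => hvE ⟨hvY, hv0, h⟩)]) hsum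
  rw [ν.nu_neg] at h
  exact h

theorem distribution_relation (Y : AddSubgroup V) {a : F} (ha : a ≠ 0)
    (hstab : ∀ v ∈ Y, a • v ∈ Y) (hfin : ∀ c : ℝ, {v : V | v ∈ Y ∧ ν.nu v ≤ c}.Finite)
    {S : Finset V} (hSmem : ∀ w ∈ S, a • w ∈ Y ∧ w ∉ Y)
    (hSinj : ∀ w ∈ S, ∀ w' ∈ S, w - w' ∈ Y → w = w')
    (hSsurj : ∀ v : V, a • v ∈ Y → v ∉ Y → ∃ w ∈ S, v - w ∈ Y) (t : ℂ)
    (hsum : Summable fun v : {v : V // v ∈ Y ∧ v ≠ 0} => ((ν.nu v : ℂ) ^ t)⁻¹) :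
    (A.abs a : ℂ) ^ t * ∑' v : {v : V // v ∈ Y ∧ v ≠ 0}, ((ν.nu v : ℂ) ^ t)⁻¹ =
      (S.card + 1) * ∑' v : {v : V // v ∈ Y ∧ v ≠ 0}, ((ν.nu v : ℂ) ^ t)⁻¹ +
        ∑ w ∈ S, (((ν.nu w : ℂ) ^ t)⁻¹ +
          ∑' v : {v : V // v ∈ Y ∧ v ≠ 0 ∧ ν.nu v ≤ ν.nu w},
            (((ν.nu (v - w) : ℂ) ^ t)⁻¹ - ((ν.nu v : ℂ) ^ t)⁻¹)) := by
  have hsplit := tsum_eq_tsum_add_sum_tsum_sub Y (Y.comap (DistribSMul.toAddMonoidHom V a))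
    hstab hSmem hSinj hSsurj (f := fun v => ((ν.nu v : ℂ) ^ t)⁻¹)
    (ν.summable_inv_cpow_nu_of_smul_mem Y ha t hsum)
  rw [← ν.tsum_inv_cpow_nu_of_smul_mem Y ha t]
  refine hsplit.trans ?_
  simp only [ν.tsum_inv_cpow_nu_sub Y hfin t hsum, Finset.sum_add_distrib, Finset.sum_const,
    nsmul_eq_mul]
  ring

end NANorm

theorem statement11_general {F : Type*} [Field F] (A : NAAbs F)
    (r : ℕ) (hr : 0 < r)
    (ν : NANorm A (Fin r → F)) (Y : AddSubgroup (Fin r → F))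
    (a : F) (ha : 1 < A.abs a) (hstab : ∀ v ∈ Y, a • v ∈ Y)
    (NY IM : ℝ) (hIM : 0 < IM)
    (hfin : ∀ c : ℝ, {v : Fin r → F | v ∈ Y ∧ ν.nu v ≤ c}.Finite)
    -- `S` is a complete set of representatives of the nonzero classes of `((1/a)Y)/Y`
    (S : Finset (Fin r → F))
    (hSmem : ∀ w ∈ S, a • w ∈ Y ∧ w ∉ Y)
    (hSinj : ∀ w ∈ S, ∀ w' ∈ S, w - w' ∈ Y → w = w')
    (hSsurj : ∀ v : Fin r → F, a • v ∈ Y → v ∉ Y → ∃ w ∈ S, v - w ∈ Y)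
    (hScard : (S.card : ℝ) = A.abs a ^ r - 1)
    (s : ℂ)
    (hsum : Summable (fun lam : {v : Fin r → F // v ∈ Y ∧ v ≠ 0} =>
      ((IM : ℝ) : ℂ) ^ s / ((ν.nu lam.1 : ℝ) : ℂ) ^ ((r : ℂ) * s))) :
    (1 - ((A.abs a : ℝ) : ℂ) ^ ((r : ℂ) - (r : ℂ) * s)) *
        (((NY : ℝ) : ℂ) ^ s * ∑' lam : {v : Fin r → F // v ∈ Y ∧ v ≠ 0},
          ((IM : ℝ) : ℂ) ^ s / ((ν.nu lam.1 : ℝ) : ℂ) ^ ((r : ℂ) * s))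
      = (((NY : ℝ) : ℂ) ^ s * ((IM : ℝ) : ℂ) ^ s / ((A.abs a : ℝ) : ℂ) ^ ((r : ℂ) * s)) *
          ∑ w ∈ S,
            ((((ν.nu w : ℝ) : ℂ) ^ ((r : ℂ) * s))⁻¹ +
              ∑' lam : {v : Fin r → F // v ∈ Y ∧ v ≠ 0 ∧ ν.nu v ≤ ν.nu w},
                ((((ν.nu (lam.1 - w) : ℝ) : ℂ) ^ ((r : ℂ) * s))⁻¹ -
                  (((ν.nu lam.1 : ℝ) : ℂ) ^ ((r : ℂ) * s))⁻¹)) ∧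
    (∀ w ∈ S, {v : Fin r → F | v ∈ Y ∧ v ≠ 0 ∧ ν.nu v ≤ ν.nu w}.Finite) ∧
    (∑ w ∈ S,
        ((((ν.nu w : ℝ) : ℂ) ^ ((r : ℂ) * (0 : ℂ)))⁻¹ +
          ∑' lam : {v : Fin r → F // v ∈ Y ∧ v ≠ 0 ∧ ν.nu v ≤ ν.nu w},
            ((((ν.nu (lam.1 - w) : ℝ) : ℂ) ^ ((r : ℂ) * (0 : ℂ)))⁻¹ -
              (((ν.nu lam.1 : ℝ) : ℂ) ^ ((r : ℂ) * (0 : ℂ)))⁻¹))) /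
      (1 - ((A.abs a : ℝ) : ℂ) ^ ((r : ℂ) - (r : ℂ) * (0 : ℂ))) = -1 := by
  have ha0 : a ≠ 0 := fun h => by linarith [(A.eq_zero a).mpr h]
  have hIMs : ((IM : ℝ) : ℂ) ^ s ≠ 0 :=
    fun h => hIM.ne' (by exact_mod_cast ((Complex.cpow_eq_zero_iff _ _).mp h).1)
  have hsumf : Summable fun v : {v : Fin r → F // v ∈ Y ∧ v ≠ 0} =>
      ((ν.nu v : ℂ) ^ ((r : ℂ) * s))⁻¹ :=
    (summable_mul_left_iff hIMs).mp (by simpa only [div_eq_mul_inv] using hsum)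
  have hcard : (S.card : ℂ) + 1 = (A.abs a : ℂ) ^ r := by
    exact_mod_cast (by linarith : (S.card : ℝ) + 1 = A.abs a ^ r)
  have hrel := ν.distribution_relation Y ha0 hstab hfin hSmem hSinj hSsurj _ hsumf
  rw [hcard] at hrel
  refine ⟨?_, fun w _ => (hfin _).subset fun v hv => ⟨hv.1, hv.2.2⟩, ?_⟩
  · have hX : (A.abs a : ℂ) ≠ 0 := by exact_mod_cast (A.eq_zero a).not.mpr ha0
    have hXt := A.cpow_abs_ne_zero ha0 ((r : ℂ) * s)
    rw [eq_sub_of_add_eq' hrel.symm, Complex.cpow_sub _ _ hX, Complex.cpow_natCast]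
    simp_rw [div_eq_mul_inv, tsum_mul_left]
    field_simp
  · have hXr : (A.abs a : ℂ) ^ r ≠ 1 := by exact_mod_cast (one_lt_pow₀ ha hr.ne').ne'
    simp only [mul_zero, Complex.cpow_zero, inv_one, sub_self, tsum_zero, add_zero,
      Finset.sum_const, nsmul_eq_mul, mul_one, sub_zero, Complex.cpow_natCast]
    rw [div_eq_iff (sub_ne_zero.mpr hXr.symm), ← hcard]
    ring

/-- The distribution relation for the non-holomorphic Eisenstein series
`𝔼^Y(z,s) = ‖Y‖^s ∑_{0≠λ∈Y} im(z)^s/ν_z(λ)^{rs}` (with `NY = ‖Y‖_A`, `IM = im(z)`): for a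
nonconstant `a ∈ A` and `Re(s) > 1`,
`(1 − |a|^{r−rs}) 𝔼^Y(z,s) = (‖Y‖^s im(z)^s/|a|^{rs}) ∑_{0≠w ∈ (1/a)Y/Y} [ν_z(w)^{-rs}
  + ∑_{0≠λ∈Y, ν(λ)≤ν(w)} (ν_z(λ−w)^{-rs} − ν_z(λ)^{-rs})]`,
with the inner sums finite; the right-hand side meromorphically continues `𝔼^Y(z,·)` and at
`s = 0` yields `𝔼^Y(z,0) = −1` (using `#((1/a)Y/Y − {0}) = |a|^r − 1`). -/
theorem statement11 {F : Type*} [Field F] (A : NAAbs F)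
    (r : ℕ) (hr : 0 < r)
    (ν : NANorm A (Fin r → F)) (Y : AddSubgroup (Fin r → F))
    (a : F) (ha : 1 < A.abs a) (hstab : ∀ v ∈ Y, a • v ∈ Y)
    (NY IM : ℝ) (hNY : 0 < NY) (hIM : 0 < IM)
    (hfin : ∀ c : ℝ, {v : Fin r → F | v ∈ Y ∧ ν.nu v ≤ c}.Finite)
    -- `S` is a complete set of representatives of the nonzero classes of `((1/a)Y)/Y`
    (S : Finset (Fin r → F))
    (hSmem : ∀ w ∈ S, a • w ∈ Y ∧ w ∉ Y)
    (hSinj : ∀ w ∈ S, ∀ w' ∈ S, w - w' ∈ Y → w = w')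
    (hSsurj : ∀ v : Fin r → F, a • v ∈ Y → v ∉ Y → ∃ w ∈ S, v - w ∈ Y)
    (hScard : (S.card : ℝ) = A.abs a ^ r - 1)
    (s : ℂ) (hs : 1 < s.re)
    (hsum : Summable (fun lam : {v : Fin r → F // v ∈ Y ∧ v ≠ 0} =>
      ((IM : ℝ) : ℂ) ^ s / ((ν.nu lam.1 : ℝ) : ℂ) ^ ((r : ℂ) * s))) :
    (1 - ((A.abs a : ℝ) : ℂ) ^ ((r : ℂ) - (r : ℂ) * s)) *
        (((NY : ℝ) : ℂ) ^ s * ∑' lam : {v : Fin r → F // v ∈ Y ∧ v ≠ 0},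
          ((IM : ℝ) : ℂ) ^ s / ((ν.nu lam.1 : ℝ) : ℂ) ^ ((r : ℂ) * s))
      = (((NY : ℝ) : ℂ) ^ s * ((IM : ℝ) : ℂ) ^ s / ((A.abs a : ℝ) : ℂ) ^ ((r : ℂ) * s)) *
          ∑ w ∈ S,
            ((((ν.nu w : ℝ) : ℂ) ^ ((r : ℂ) * s))⁻¹ +
              ∑' lam : {v : Fin r → F // v ∈ Y ∧ v ≠ 0 ∧ ν.nu v ≤ ν.nu w},
                ((((ν.nu (lam.1 - w) : ℝ) : ℂ) ^ ((r : ℂ) * s))⁻¹ -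
                  (((ν.nu lam.1 : ℝ) : ℂ) ^ ((r : ℂ) * s))⁻¹)) ∧
    (∀ w ∈ S, {v : Fin r → F | v ∈ Y ∧ v ≠ 0 ∧ ν.nu v ≤ ν.nu w}.Finite) ∧
    (∑ w ∈ S,
        ((((ν.nu w : ℝ) : ℂ) ^ ((r : ℂ) * (0 : ℂ)))⁻¹ +
          ∑' lam : {v : Fin r → F // v ∈ Y ∧ v ≠ 0 ∧ ν.nu v ≤ ν.nu w},
            ((((ν.nu (lam.1 - w) : ℝ) : ℂ) ^ ((r : ℂ) * (0 : ℂ)))⁻¹ -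
              (((ν.nu lam.1 : ℝ) : ℂ) ^ ((r : ℂ) * (0 : ℂ)))⁻¹))) /
      (1 - ((A.abs a : ℝ) : ℂ) ^ ((r : ℂ) - (r : ℂ) * (0 : ℂ))) = -1 :=
  statement11_general A r hr ν Y a ha hstab NY IM hIM hfin S hSmem hSinj hSsurj hScard s hsum
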